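/- arXiv:1508.02434 — 6 statements merged into one kernel-verified Lean document; each statement's English description precedes it below -/
import Mathlib

section
/- Let m > 0 be a real number and let σ ∈ {+1, −1}. The map k ↦ z_m(k) = m(1 + k²)/(1 − k²) is a bijection from the open quarter-plane {k ∈ ℂ : Re(k) > 0 and σ·Im(k) > 0} onto the open half-plane {z ∈ ℂ : σ·Im(z) > 0}. In particular, every z with Im(z) > 0 (resp. Im(z) < 0) equals z_m(k) for a unique k with Re(k) > 0 and Im(k) > 0 (resp. Im(k) < 0). -/
/-!
The map factors as `k ↦ k²` followed by the Möbius map `w ↦ m(1 + w)/(1 - w)`.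
Squaring sends the quarter-plane bijectively onto the half-plane `σ·Im w > 0`, since
`Im k² = 2 Re k Im k` and every point off `(-∞, 0]` has exactly one square root with positive
real part. The Möbius map preserves that half-plane, because for real `m`
`Im (m(1 + w)/(1 - w)) = 2m Im w / |1 - w|²`, and it is inverted there by `z ↦ (z - m)/(z + m)`.
-/

open Complex Set

theorem Set.BijOn.existsUnique_mem_eq {α β : Type*} {f : α → β} {s : Set α} {t : Set β}
    (h : BijOn f s t) {y : β} (hy : y ∈ t) : ∃! x, x ∈ s ∧ y = f x := by
  obtain ⟨x, hx, rfl⟩ := h.surjOn hy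
  exact ⟨x, ⟨hx, rfl⟩, fun x' ⟨hx', hxx'⟩ => h.injOn hx' hx hxx'.symm⟩

namespace Complex

theorem im_sq (k : ℂ) : (k ^ 2).im = 2 * k.re * k.im := by
  rw [sq, mul_im]; ring

theorem exists_re_pos_sq_eq {w : ℂ} (hw : w ∈ slitPlane) : ∃ k : ℂ, 0 < k.re ∧ k ^ 2 = w := by
  obtain ⟨k, hk⟩ := IsAlgClosed.exists_pow_nat_eq w two_pos
  have hre : k.re ≠ 0 := by
    intro h
    rw [mem_slitPlane_iff, ← hk, im_sq, h, sq, mul_re, h] at hw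
    rcases hw with hw | hw
    · nlinarith
    · simp at hw
  rcases hre.lt_or_gt with hneg | hpos
  · exact ⟨-k, by simpa using hneg, by rw [neg_sq, hk]⟩
  · exact ⟨k, hpos, hk⟩

theorem im_ofReal_mul_one_add_div_one_sub (m : ℝ) (w : ℂ) :
    ((m : ℂ) * (1 + w) / (1 - w)).im = 2 * m * w.im / normSq (1 - w) := by
  rw [div_im]
  simp only [mul_re, mul_im, ofReal_re, ofReal_im, add_re, add_im, sub_re, sub_im, one_re, one_im]
  ring

theorem im_sub_ofReal_div_add_ofReal (m : ℝ) (z : ℂ) :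
    ((z - m) / (z + m)).im = 2 * m * z.im / normSq (z + m) := by
  rw [div_im]
  simp only [add_re, add_im, sub_re, sub_im, ofReal_re, ofReal_im]
  ring

end Complex

section HalfPlane

variable (σ : ℝ)

theorem bijOn_sq_quarterPlane :
    BijOn (fun k : ℂ => k ^ 2) {k | 0 < k.re ∧ 0 < σ * k.im} {w | 0 < σ * w.im} := by
  have him_sq (k : ℂ) : σ * (k ^ 2).im = 2 * k.re * (σ * k.im) := by rw [im_sq]; ring
  refine BijOn.mk (fun k ⟨hre, him⟩ => ?_) (fun k₁ ⟨hre₁, _⟩ k₂ ⟨hre₂, _⟩ heq => ?_) ?_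
  · change 0 < σ * (k ^ 2).im
    rw [him_sq]; positivity
  · rcases sq_eq_sq_iff_eq_or_eq_neg.1 heq with h | h
    · exact h
    · have := congrArg re h
      simp only [neg_re] at this
      linarith
  · intro w hw
    have hwim : w.im ≠ 0 := by rintro h; simp [h] at hw
    obtain ⟨k, hre, rfl⟩ := exists_re_pos_sq_eq (mem_slitPlane_iff.2 (Or.inr hwim))
    refine ⟨k, ⟨hre, ?_⟩, rfl⟩
    rw [mem_ofPred_eq, him_sq] at hw
    exact pos_of_mul_pos_right hw (by positivity)

theorem bijOn_mobius_halfPlane {m : ℝ} (hm : 0 < m) :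
    BijOn (fun w : ℂ => (m : ℂ) * (1 + w) / (1 - w)) {w | 0 < σ * w.im} {z | 0 < σ * z.im} := by
  have hm' : (m : ℂ) ≠ 0 := ofReal_ne_zero.2 hm.ne'
  have one_sub_ne {w : ℂ} (hw : 0 < σ * w.im) : 1 - w ≠ 0 := by
    intro h; rw [← sub_eq_zero.1 h] at hw; simp at hw
  have add_ne {z : ℂ} (hz : 0 < σ * z.im) : z + m ≠ 0 := by
    intro h; rw [eq_neg_of_add_eq_zero_left h] at hz; simp at hz
  have scale_pos {x n : ℝ} (hx : 0 < σ * x) (hn : 0 < n) : 0 < σ * (2 * m * x / n) := by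
    rw [mul_div_assoc', mul_left_comm]; positivity
  refine InvOn.bijOn (f' := fun z => (z - m) / (z + m)) ⟨fun w hw => ?_, fun z hz => ?_⟩
    (fun w hw => ?_) (fun z hz => ?_)
  · have := one_sub_ne hw
    field_simp
    ring
  · have := add_ne hz
    field_simp
    rw [div_eq_iff (by ring_nf; simpa using hm')]
    ring
  · change 0 < σ * ((m : ℂ) * (1 + w) / (1 - w)).im
    rw [im_ofReal_mul_one_add_div_one_sub]
    exact scale_pos hw (normSq_pos.2 (one_sub_ne hw))
  · change 0 < σ * ((z - m) / (z + m)).im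
    rw [im_sub_ofReal_div_add_ofReal]
    exact scale_pos hz (normSq_pos.2 (add_ne hz))

end HalfPlane

theorem z_m_bijOn_quarter_plane_general (m σ : ℝ) (hm : 0 < m) :
    Set.BijOn (fun k : ℂ => (m : ℂ) * (1 + k ^ 2) / (1 - k ^ 2))
      {k : ℂ | 0 < k.re ∧ 0 < σ * k.im}
      {z : ℂ | 0 < σ * z.im}
    ∧ ∀ z : ℂ, 0 < σ * z.im →
        ∃! k : ℂ, (0 < k.re ∧ 0 < σ * k.im)
          ∧ z = (m : ℂ) * (1 + k ^ 2) / (1 - k ^ 2) := by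
  have h := (bijOn_mobius_halfPlane σ hm).comp (bijOn_sq_quarterPlane σ)
  exact ⟨h, fun z hz => h.existsUnique_mem_eq hz⟩

/-- For `m > 0` and `σ ∈ {+1, -1}`, the map
`k ↦ z_m(k) = m(1 + k²)/(1 - k²)` is a bijection from the open quarter-plane
`{k : Re k > 0, σ·Im k > 0}` onto the half-plane `{z : σ·Im z > 0}`.  In particular,
every `z` with `σ·Im z > 0` equals `z_m(k)` for a unique `k` in that quarter-plane. -/
theorem z_m_bijOn_quarter_plane (m σ : ℝ) (hm : 0 < m) (hσ : σ = 1 ∨ σ = -1) :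
    Set.BijOn (fun k : ℂ => (m : ℂ) * (1 + k ^ 2) / (1 - k ^ 2))
      {k : ℂ | 0 < k.re ∧ 0 < σ * k.im}
      {z : ℂ | 0 < σ * z.im}
    ∧ ∀ z : ℂ, 0 < σ * z.im →
        ∃! k : ℂ, (0 < k.re ∧ 0 < σ * k.im)
          ∧ z = (m : ℂ) * (1 + k ^ 2) / (1 - k ^ 2) :=
  z_m_bijOn_quarter_plane_general m σ hm
end

section
/- Let z ∈ ℂ with z ∉ [0, +∞), and let ζ ∈ ℂ satisfy ζ² = z and Im(ζ) > 0. Let f : ℝ → ℂ be continuous with compact support, and define u : ℝ → ℂ by u(x) = (i/(2ζ)) ∫_ℝ e^{iζ|x − y|} f(y) dy. Then u is twice differentiable on ℝ and satisfies −u''(x) − z·u(x) = f(x) for all x ∈ ℝ. -/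
/-!
Splitting the integral at `y = x` makes the kernel factorise:
`∫ e^{a|x-y|} f(y) dy = L(x) + R(x)` with `L(x) = e^{ax} ∫_{y ≤ x} e^{-ay} f(y) dy` and
`R(x) = e^{-ax} ∫_{y > x} e^{ay} f(y) dy`. By the fundamental theorem of calculus
`L' = aL + f` and `R' = -aR - f`, so the `f` terms cancel in `(L + R)' = a(L - R)` and add up in
`(L + R)'' = a²(L + R) + 2af`. For `a = iζ` we have `a² = -z` and `(i/(2ζ)) · 2a = -1`.
-/

open MeasureTheory Set Complex

section SetIntegralDeriv

variable {E : Type*} [NormedAddCommGroup E] [NormedSpace ℝ E] [CompleteSpace E]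
  {g : ℝ → E}

theorem hasDerivAt_setIntegral_Iic (hg : Continuous g) (hgi : Integrable g) (x : ℝ) :
    HasDerivAt (fun t => ∫ y in Iic t, g y) (g x) x := by
  have hsplit (t : ℝ) : ∫ y in Iic t, g y = (∫ y in Iic 0, g y) + ∫ y in (0 : ℝ)..t, g y := by
    rw [← intervalIntegral.integral_Iic_sub_Iic hgi.integrableOn hgi.integrableOn]
    abel
  rw [funext hsplit]
  exact (intervalIntegral.integral_hasDerivAt_right hgi.intervalIntegrable
    hg.aestronglyMeasurable.stronglyMeasurableAtFilter hg.continuousAt).const_add _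

theorem hasDerivAt_setIntegral_Ioi (hg : Continuous g) (hgi : Integrable g) (x : ℝ) :
    HasDerivAt (fun t => ∫ y in Ioi t, g y) (-g x) x := by
  have hsplit (t : ℝ) : ∫ y in Ioi t, g y = (∫ y, g y) - ∫ y in Iic t, g y := by
    rw [← intervalIntegral.integral_Iic_add_Ioi hgi.integrableOn hgi.integrableOn]
    abel
  rw [funext hsplit]
  exact (hasDerivAt_setIntegral_Iic hg hgi x).const_sub _

end SetIntegralDeriv

theorem hasDerivAt_cexp_const_mul (a : ℂ) (x : ℝ) :
    HasDerivAt (fun t : ℝ => cexp (a * t)) (a * cexp (a * x)) x := by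
  simpa [mul_comm] using ((ofRealCLM.hasDerivAt (x := x)).const_mul a).cexp

section ExpAbsKernel

variable (a : ℂ) (f : ℝ → ℂ)

noncomputable def expKernelLeft (x : ℝ) : ℂ :=
  cexp (a * x) * ∫ y in Iic x, cexp (-a * y) * f y

noncomputable def expKernelRight (x : ℝ) : ℂ :=
  cexp (-a * x) * ∫ y in Ioi x, cexp (a * y) * f y

variable {a f}

theorem integrable_cexp_comp_mul {h : ℝ → ℂ} (hh : Continuous h) (hf : Continuous f)
    (hsupp : HasCompactSupport f) : Integrable fun y => cexp (h y) * f y :=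
  ((continuous_exp.comp hh).mul hf).integrable_of_hasCompactSupport hsupp.mul_left

theorem integral_cexp_mul_abs_sub_mul (hf : Continuous f) (hsupp : HasCompactSupport f)
    (x : ℝ) :
    ∫ y, cexp (a * (|x - y| : ℝ)) * f y = expKernelLeft a f x + expKernelRight a f x := by
  have hint : Integrable fun y => cexp (a * (|x - y| : ℝ)) * f y :=
    integrable_cexp_comp_mul (by fun_prop) hf hsupp
  rw [← intervalIntegral.integral_Iic_add_Ioi hint.integrableOn hint.integrableOn,
    expKernelLeft, expKernelRight, ← integral_const_mul, ← integral_const_mul]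
  congr 1
  · refine setIntegral_congr_fun measurableSet_Iic fun y hy => ?_
    rw [abs_of_nonneg (sub_nonneg.2 hy), ← mul_assoc, ← Complex.exp_add]
    push_cast
    ring_nf
  · refine setIntegral_congr_fun measurableSet_Ioi fun y hy => ?_
    rw [abs_of_neg (sub_neg.2 hy), ← mul_assoc, ← Complex.exp_add]
    push_cast
    ring_nf

theorem hasDerivAt_expKernelLeft (hf : Continuous f) (hsupp : HasCompactSupport f) (x : ℝ) :
    HasDerivAt (expKernelLeft a f) (a * expKernelLeft a f x + f x) x := by
  refine HasDerivAt.congr_deriv (f := expKernelLeft a f)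
    ((hasDerivAt_cexp_const_mul a x).mul (hasDerivAt_setIntegral_Iic
    (g := fun y : ℝ => cexp (-a * y) * f y) (by fun_prop)
    (integrable_cexp_comp_mul (by fun_prop) hf hsupp) x)) ?_
  simp only [expKernelLeft, neg_mul, Complex.exp_neg]
  field_simp

theorem hasDerivAt_expKernelRight (hf : Continuous f) (hsupp : HasCompactSupport f) (x : ℝ) :
    HasDerivAt (expKernelRight a f) (-a * expKernelRight a f x - f x) x := by
  refine HasDerivAt.congr_deriv (f := expKernelRight a f)
    ((hasDerivAt_cexp_const_mul (-a) x).mul (hasDerivAt_setIntegral_Ioi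
    (g := fun y : ℝ => cexp (a * y) * f y) (by fun_prop)
    (integrable_cexp_comp_mul (by fun_prop) hf hsupp) x)) ?_
  simp only [expKernelRight, neg_mul, Complex.exp_neg]
  field_simp
  ring

theorem hasDerivAt_integral_cexp_mul_abs_sub_mul (hf : Continuous f)
    (hsupp : HasCompactSupport f) (x : ℝ) :
    HasDerivAt (fun x : ℝ => ∫ y, cexp (a * (|x - y| : ℝ)) * f y)
      (a * (expKernelLeft a f x - expKernelRight a f x)) x := by
  rw [funext (integral_cexp_mul_abs_sub_mul hf hsupp)]
  exact ((hasDerivAt_expKernelLeft hf hsupp x).add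
    (hasDerivAt_expKernelRight hf hsupp x)).congr_deriv (by ring)

theorem hasDerivAt_deriv_integral_cexp_mul_abs_sub_mul (hf : Continuous f)
    (hsupp : HasCompactSupport f) (x : ℝ) :
    HasDerivAt (deriv fun x : ℝ => ∫ y, cexp (a * (|x - y| : ℝ)) * f y)
      (a ^ 2 * (∫ y, cexp (a * (|x - y| : ℝ)) * f y) + 2 * a * f x) x := by
  have hderiv : (deriv fun x : ℝ => ∫ y, cexp (a * (|x - y| : ℝ)) * f y) =
      fun x => a * (expKernelLeft a f x - expKernelRight a f x) :=
    funext fun x => (hasDerivAt_integral_cexp_mul_abs_sub_mul hf hsupp x).deriv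
  rw [hderiv, integral_cexp_mul_abs_sub_mul hf hsupp x]
  exact (((hasDerivAt_expKernelLeft hf hsupp x).sub
    (hasDerivAt_expKernelRight hf hsupp x)).const_mul a).congr_deriv (by ring)

end ExpAbsKernel

theorem resolvent_kernel_one_dim_laplacian_general (z ζ : ℂ)
    (hζ : ζ ^ 2 = z) (hζim : 0 < ζ.im)
    (f : ℝ → ℂ) (hf : Continuous f) (hsupp : HasCompactSupport f) :
    ∀ u : ℝ → ℂ,
      (u = fun x : ℝ =>
        (Complex.I / (2 * ζ)) * ∫ y : ℝ, Complex.exp (Complex.I * ζ * (|x - y| : ℝ)) * f y) →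
      (∀ x : ℝ, DifferentiableAt ℝ u x)
      ∧ (∀ x : ℝ, DifferentiableAt ℝ (deriv u) x)
      ∧ (∀ x : ℝ, -(deriv (deriv u) x) - z * u x = f x) := by
  intro u rfl
  have hζ0 : ζ ≠ 0 := fun h => by simp [h] at hζim
  have hw := hasDerivAt_integral_cexp_mul_abs_sub_mul (a := I * ζ) hf hsupp
  have hw' := hasDerivAt_deriv_integral_cexp_mul_abs_sub_mul (a := I * ζ) hf hsupp
  set w : ℝ → ℂ := fun x => ∫ y, cexp (I * ζ * (|x - y| : ℝ)) * f y
  have hderiv : deriv (fun x => I / (2 * ζ) * w x) = fun x => I / (2 * ζ) * deriv w x :=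
    funext fun x => deriv_const_mul _ (hw x).differentiableAt
  refine ⟨fun x => ((hw x).const_mul _).differentiableAt, fun x => ?_, fun x => ?_⟩
  · rw [hderiv]
    exact ((hw' x).const_mul _).differentiableAt
  · have hc : I / (2 * ζ) * (2 * (I * ζ)) = -1 := by
      field_simp
      exact I_sq
    rw [hderiv, ((hw' x).const_mul _).deriv]
    linear_combination
      (I / (2 * ζ) * w x) * hζ - f x * hc - I / (2 * ζ) * ζ ^ 2 * w x * I_sq

/-- Let `z ∉ [0, +∞)`, and let `ζ` satisfy `ζ² = z`, `Im ζ > 0`.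
For `f : ℝ → ℂ` continuous with compact support, the function
`u(x) = (i/(2ζ)) ∫ e^{iζ|x - y|} f(y) dy` is twice differentiable and satisfies
`-u'' - z·u = f` on `ℝ`. -/
theorem resolvent_kernel_one_dim_laplacian (z ζ : ℂ)
    (hz : ∀ x : ℝ, 0 ≤ x → z ≠ (x : ℂ))
    (hζ : ζ ^ 2 = z) (hζim : 0 < ζ.im)
    (f : ℝ → ℂ) (hf : Continuous f) (hsupp : HasCompactSupport f) :
    ∀ u : ℝ → ℂ,
      (u = fun x : ℝ =>
        (Complex.I / (2 * ζ)) * ∫ y : ℝ, Complex.exp (Complex.I * ζ * (|x - y| : ℝ)) * f y) →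
      (∀ x : ℝ, DifferentiableAt ℝ u x)
      ∧ (∀ x : ℝ, DifferentiableAt ℝ (deriv u) x)
      ∧ (∀ x : ℝ, -(deriv (deriv u) x) - z * u x = f x) :=
  resolvent_kernel_one_dim_laplacian_general z ζ hζ hζim f hf hsupp
end

section
/- Let 0 < r < R be real numbers, and let g : ℂ → ℂ be continuous on the closed disc {z : |z| ≤ R}, holomorphic on the open disc {z : |z| < R}, with g(0) ≠ 0. Then the set Z of zeros of g in the closed disc {z : |z| ≤ r} is finite, and the number N of such zeros counted with multiplicity (the sum over Z of the vanishing orders of g) satisfies N ≤ (log(R/r))^{−1} · ( log( sup_{|z| = R} |g(z)| ) − log |g(0)| ). -/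
open Metric Filter Topology ComplexConjugate

/-!
Divide `g` by `P w = ∏ (w - z) ^ n z` over its zeros in the small disc, and multiply the quotient
by the Blaschke-type factor `B w = ∏ (R ^ 2 - conj z * w) ^ n z`, which has the same modulus as
`R ^ N * P` on the circle `‖w‖ = R`. The maximum principle applied to `(g / P) * B` gives
`‖g 0 / P 0‖ * R ^ N ≤ sup_{‖w‖ = R} ‖g w‖`, and `‖P 0‖ ≤ r ^ N` turns this into
`‖g 0‖ * (R / r) ^ N ≤ sup_{‖w‖ = R} ‖g w‖`; take logarithms.
-/

theorem AnalyticOnNhd.setOf_mem_and_eq_zero_finite {𝕜 E : Type*} [NontriviallyNormedField 𝕜]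
    [NormedAddCommGroup E] [NormedSpace 𝕜 E] {U K : Set 𝕜} {f : 𝕜 → E} {x : 𝕜}
    (hf : AnalyticOnNhd 𝕜 f U) (hU : IsConnected U) (hx : x ∈ U) (hfx : f x ≠ 0)
    (hK : IsCompact K) (hKU : K ⊆ U) :
    {z | z ∈ K ∧ f z = 0}.Finite := by
  convert hK.finite_sdiff_of_mem_codiscreteWithin
    (codiscreteWithin_mono hKU (hf.preimage_zero_mem_codiscreteWithin hfx hx hU)) using 1
  ext z
  simp

theorem DiffContOnCl.exists_eq_mul_prod_sub_pow {U : Set ℂ} {g : ℂ → ℂ}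
    (hg : DiffContOnCl ℂ g U) (Z : Finset ℂ) (n : ℂ → ℕ) (h : ℂ → ℂ → ℂ)
    (hh : ∀ z ∈ Z, AnalyticAt ℂ (h z) z)
    (hgh : ∀ z ∈ Z, ∀ᶠ w in 𝓝 z, g w = (w - z) ^ n z * h z w) :
    ∃ φ : ℂ → ℂ, DiffContOnCl ℂ φ U ∧
      ∀ w, g w = φ w * ∏ z ∈ Z, (w - z) ^ n z := by
  classical
  set P : ℂ → ℂ := fun w => ∏ z ∈ Z, (w - z) ^ n z
  set E : ℂ → ℂ → ℂ := fun z w => ∏ z' ∈ Z.erase z, (w - z') ^ n z'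
  have hP : Differentiable ℂ P := by fun_prop
  have hP_ne : ∀ w ∉ Z, P w ≠ 0 := fun w hw =>
    Finset.prod_ne_zero_iff.2 fun z hz =>
      pow_ne_zero _ (sub_ne_zero.2 (ne_of_mem_of_not_mem hz hw).symm)
  have hE_ne : ∀ z, E z z ≠ 0 := fun z =>
    Finset.prod_ne_zero_iff.2 fun z' hz' =>
      pow_ne_zero _ (sub_ne_zero.2 (Finset.ne_of_mem_erase hz').symm)
  have hPE : ∀ z ∈ Z, ∀ w, P w = (w - z) ^ n z * E z w := fun z hz w =>
    (Finset.mul_prod_erase Z (fun z' => (w - z') ^ n z') hz).symm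
  let φ : ℂ → ℂ := fun w => if w ∈ Z then h w w / E w w else g w / P w
  have hφ_off : ∀ w ∉ Z, φ =ᶠ[𝓝 w] fun x => g x / P x := fun w hw => by
    filter_upwards [Z.finite_toSet.isClosed.isOpen_compl.mem_nhds hw] with x hx
    exact if_neg hx
  have hφ_on : ∀ z ∈ Z, AnalyticAt ℂ φ z := by
    intro z hz
    have hmodel : AnalyticAt ℂ (fun w => h z w / E z w) z :=
      (hh z hz).div (by fun_prop) (hE_ne z)
    refine hmodel.congr ?_
    have hnear : ∀ᶠ w in 𝓝 z, w ∉ Z.erase z :=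
      (Z.erase z).finite_toSet.isClosed.isOpen_compl.mem_nhds (Finset.notMem_erase z Z)
    filter_upwards [hgh z hz, hnear] with w hgw hw
    by_cases hwz : w = z
    · subst hwz
      exact (if_pos hz).symm
    · have hwZ : w ∉ Z := fun hw' => hw (Finset.mem_erase.2 ⟨hwz, hw'⟩)
      simp only [φ, if_neg hwZ, hgw, hPE z hz w]
      rw [mul_div_mul_left _ _ (pow_ne_zero _ (sub_ne_zero.2 hwz))]
  refine ⟨φ, ⟨fun w hw => ?_, fun w hw => ?_⟩, fun w => ?_⟩
  · by_cases hwZ : w ∈ Z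
    · exact (hφ_on w hwZ).differentiableAt.differentiableWithinAt
    · exact ((hg.1 w hw).div hP.differentiableAt.differentiableWithinAt (hP_ne w hwZ))
        |>.congr_of_eventuallyEq (nhdsWithin_le_nhds (hφ_off w hwZ)) (hφ_off w hwZ).self_of_nhds
  · by_cases hwZ : w ∈ Z
    · exact (hφ_on w hwZ).continuousAt.continuousWithinAt
    · exact ((hg.2 w hw).div hP.continuous.continuousWithinAt (hP_ne w hwZ))
        |>.congr_of_eventuallyEq (nhdsWithin_le_nhds (hφ_off w hwZ)) (hφ_off w hwZ).self_of_nhds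
  · change g w = φ w * P w
    by_cases hwZ : w ∈ Z
    · rw [(hgh w hwZ).self_of_nhds, hPE w hwZ w]
      simp only [φ, if_pos hwZ]
      field_simp [hE_ne w]
    · simp only [φ, if_neg hwZ]
      rw [div_mul_cancel₀ _ (hP_ne w hwZ)]

theorem norm_sq_sub_conj_mul_of_norm_eq {R : ℝ} {w : ℂ} (hw : ‖w‖ = R) (z : ℂ) :
    ‖(R : ℂ) ^ 2 - conj z * w‖ = R * ‖w - z‖ := by
  subst hw
  rw [← Complex.conj_mul', ← sub_mul, ← map_sub, norm_mul, Complex.norm_conj, mul_comm]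

theorem DiffContOnCl.norm_zero_mul_pow_le {φ : ℂ → ℂ} {R M : ℝ} (hR : 0 < R)
    (hφ : DiffContOnCl ℂ φ (ball 0 R)) (Z : Finset ℂ) (n : ℂ → ℕ)
    (hM : ∀ w ∈ sphere (0 : ℂ) R, ‖φ w * ∏ z ∈ Z, (w - z) ^ n z‖ ≤ M) :
    ‖φ 0‖ * R ^ ∑ z ∈ Z, n z ≤ M := by
  set N := ∑ z ∈ Z, n z with hN
  set B : ℂ → ℂ := fun w => ∏ z ∈ Z, ((R : ℂ) ^ 2 - conj z * w) ^ n z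
  have hF : DiffContOnCl ℂ (fun w => φ w * B w) (ball 0 R) :=
    hφ.smul (Differentiable.diffContOnCl (by fun_prop))
  have hF_sphere : ∀ w ∈ frontier (ball (0 : ℂ) R), ‖φ w * B w‖ ≤ R ^ N * M := by
    rw [frontier_ball _ hR.ne']
    intro w hw
    have hB : ‖B w‖ = R ^ N * ‖∏ z ∈ Z, (w - z) ^ n z‖ := by
      simp only [B, norm_prod, norm_pow, mul_pow,
        norm_sq_sub_conj_mul_of_norm_eq (mem_sphere_zero_iff_norm.1 hw),
        Finset.prod_mul_distrib, Finset.prod_pow_eq_pow_sum, ← hN]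
    rw [norm_mul, hB, mul_left_comm, ← norm_mul]
    gcongr
    exact hM w hw
  have hF0 := Complex.norm_le_of_forall_mem_frontier_norm_le isBounded_ball hF hF_sphere
    (subset_closure (mem_ball_self hR))
  have hB0 : B 0 = ((R : ℂ) ^ 2) ^ N := by
    simp only [B, mul_zero, sub_zero, Finset.prod_pow_eq_pow_sum, ← hN]
  rw [norm_mul, hB0, norm_pow, norm_pow, Complex.norm_real, Real.norm_of_nonneg hR.le, sq, mul_pow,
    ← mul_assoc, mul_comm (R ^ N) M] at hF0
  exact le_of_mul_le_mul_right hF0 (by positivity)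

theorem norm_prod_sub_pow_le {w : ℂ} {r : ℝ} (Z : Finset ℂ) (n : ℂ → ℕ)
    (hZ : ∀ z ∈ Z, ‖w - z‖ ≤ r) :
    ‖∏ z ∈ Z, (w - z) ^ n z‖ ≤ r ^ ∑ z ∈ Z, n z := by
  rw [norm_prod, ← Finset.prod_pow_eq_pow_sum]
  exact Finset.prod_le_prod (fun _ _ => by positivity)
    fun z hz => by rw [norm_pow]; exact pow_le_pow_left₀ (norm_nonneg _) (hZ z hz) _

theorem natCast_le_inv_log_mul_sub_log {a b M : ℝ} {N : ℕ} (ha : 0 < a) (hb : 1 < b)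
    (h : a * b ^ N ≤ M) :
    (N : ℝ) ≤ (Real.log b)⁻¹ * (Real.log M - Real.log a) := by
  rw [inv_mul_eq_div, le_div_iff₀ (Real.log_pos hb)]
  have hlog := Real.log_le_log (by positivity) h
  rw [Real.log_mul ha.ne' (by positivity), Real.log_pow] at hlog
  linarith

/-- (Jensen-type bound on the number of zeros.)  For `0 < r < R` and
`g` continuous on the closed disc of radius `R`, holomorphic on the open disc, with
`g 0 ≠ 0`, the set of zeros of `g` in the closed disc of radius `r` is finite, and the
number of zeros counted with multiplicity is at most
`(log(R/r))⁻¹ (log sup_{|z|=R} |g| - log |g 0|)`. -/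
theorem jensen_zero_count (r R : ℝ) (hr : 0 < r) (hrR : r < R) (g : ℂ → ℂ)
    (hc : ContinuousOn g (closedBall (0 : ℂ) R))
    (hd : DifferentiableOn ℂ g (ball (0 : ℂ) R))
    (h0 : g 0 ≠ 0) :
    ∃ Z : Finset ℂ,
      (∀ z : ℂ, z ∈ Z ↔ z ∈ closedBall (0 : ℂ) r ∧ g z = 0)
      ∧ ∀ n : ℂ → ℕ,
          (∀ z ∈ Z, ∃ h : ℂ → ℂ, AnalyticAt ℂ h z ∧ h z ≠ 0
            ∧ ∀ᶠ w in nhds z, g w = (w - z) ^ n z * h w) →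
          ((∑ z ∈ Z, n z : ℕ) : ℝ)
            ≤ (Real.log (R / r))⁻¹
              * (Real.log (sSup ((fun z => ‖g z‖) '' sphere (0 : ℂ) R))
                  - Real.log (‖g 0‖)) := by
  have hR : 0 < R := hr.trans hrR
  have hfin := (hd.analyticOnNhd isOpen_ball).setOf_mem_and_eq_zero_finite (isConnected_ball hR)
    (mem_ball_self hR) h0 (isCompact_closedBall 0 r) (closedBall_subset_ball hrR)
  refine ⟨hfin.toFinset, fun z => hfin.mem_toFinset, fun n hn => ?_⟩
  choose! h hh _ hgh using hn
  obtain ⟨φ, hφ, hgφ⟩ := (DiffContOnCl.mk_ball hd hc).exists_eq_mul_prod_sub_pow _ n h hh hgh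
  have hbdd : BddAbove ((fun z => ‖g z‖) '' sphere (0 : ℂ) R) :=
    ((isCompact_sphere 0 R).image_of_continuousOn
      (hc.mono sphere_subset_closedBall).norm).bddAbove
  have hφ0 := hφ.norm_zero_mul_pow_le hR _ n fun w hw =>
    hgφ w ▸ le_csSup hbdd (Set.mem_image_of_mem _ hw)
  have hP0 := norm_prod_sub_pow_le (w := 0) hfin.toFinset n fun z hz => by
    simpa using (hfin.mem_toFinset.1 hz).1
  refine natCast_le_inv_log_mul_sub_log (norm_pos_iff.2 h0) ((one_lt_div hr).2 hrR) ?_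
  calc ‖g 0‖ * (R / r) ^ _ ≤ ‖φ 0‖ * r ^ _ * (R / r) ^ _ := by
        rw [hgφ 0, norm_mul]
        gcongr
    _ = ‖φ 0‖ * R ^ _ := by rw [mul_assoc, ← mul_pow, mul_div_cancel₀ _ hr.ne']
    _ ≤ _ := hφ0
end

section
/- Let H be a complex Hilbert space and let B : H → H be a bounded self-adjoint operator with B ≥ 0 (i.e. ⟨Bu, u⟩ ≥ 0 for all u ∈ H). Let k, Φ ∈ ℂ \ {0}, let J ∈ {+1, −1}, and set w := k/Φ. Assume that Re(w) ≠ 0 or J·Im(w) > 0. Then the operator I + (iJΦ/k)·B is boundedly invertible and ‖(I + (iJΦ/k)·B)^{−1}‖ ≤ |w| / sqrt( ((J·Im(w))₊)² + (Re(w))² ), where t₊ := max(t, 0) for t ∈ ℝ. -/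
/-!
Put `w = k / Φ` and `T = 1 + (iJΦ/k) • B`. Since `⟪u, B u⟫ = b ≥ 0`, we get
`w ⟪u, T u⟫ = w ‖u‖² + iJ b`, a point of the ray `‖u‖² (w + iJ [0, ∞))`. The distance from `0`
to the ray `w + iJ [0, ∞)` is `c = √((J Im w)₊² + (Re w)²)`, so `T` is coercive:
`(c / |w|) ‖u‖² ≤ |⟪T u, u⟫|`. A coercive operator on a Hilbert space is invertible, and its
inverse has norm at most the reciprocal of the coercivity constant, here `|w| / c`.
-/

open ContinuousLinearMap

theorem ContinuousLinearMap.exists_inverse_norm_le_of_forall_le_norm_inner_map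
    {𝕜 E : Type*} [RCLike 𝕜] [NormedAddCommGroup E] [InnerProductSpace 𝕜 E] [CompleteSpace E]
    (f : E →L[𝕜] E) {δ : ℝ} (hδ : 0 < δ) (h : ∀ x, ‖x‖ ^ 2 * δ ≤ ‖inner 𝕜 (f x) x‖) :
    ∃ g : E →L[𝕜] E, g * f = 1 ∧ f * g = 1 ∧ ‖g‖ ≤ δ⁻¹ := by
  lift δ to NNReal using hδ.le
  obtain ⟨u, rfl⟩ := isUnit_of_forall_le_norm_inner_map f hδ h
  refine ⟨↑u⁻¹, u.inv_mul, u.mul_inv, opNorm_le_bound _ (by positivity) fun y ↦ ?_⟩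
  have := bound_of_antilipschitz _ (antilipschitz_of_forall_le_inner_map _ hδ h)
    ((↑u⁻¹ : E →L[𝕜] E) y)
  rwa [← mul_apply_eq_comp, u.mul_inv, one_apply_eq_self, NNReal.coe_inv] at this

theorem ContinuousLinearMap.inner_one_add_smul_apply_self {𝕜 E : Type*} [RCLike 𝕜]
    [NormedAddCommGroup E] [InnerProductSpace 𝕜 E] (B : E →L[𝕜] E) (a : 𝕜) (x : E) :
    inner 𝕜 x ((1 + a • B) x) = (‖x‖ : 𝕜) ^ 2 + a * inner 𝕜 x (B x) := by
  rw [add_apply, one_apply_eq_self, smul_apply, inner_add_right, inner_smul_right,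
    inner_self_eq_norm_sq_to_K]

theorem Complex.sqrt_max_sq_add_sq_mul_le_norm (w : ℂ) {J : ℝ} (hJ : J = 1 ∨ J = -1) {r b : ℝ}
    (hr : 0 ≤ r) (hb : 0 ≤ b) :
    Real.sqrt ((max (J * w.im) 0) ^ 2 + w.re ^ 2) * r ≤ ‖w * r + I * J * b‖ := by
  rw [norm_def, Real.le_sqrt (by positivity) (normSq_nonneg _), mul_pow,
    Real.sq_sqrt (by positivity)]
  have hJ2 : J ^ 2 = 1 := by rcases hJ with rfl | rfl <;> norm_num
  have him : (max (J * w.im) 0 * r) ^ 2 ≤ (w.im * r + J * b) ^ 2 := by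
    rw [show (w.im * r + J * b) ^ 2 = (J * w.im * r + b) ^ 2 by
      linear_combination (b ^ 2 - (w.im * r) ^ 2) * hJ2]
    rcases le_or_gt (J * w.im) 0 with h | h
    · simpa [max_eq_right h] using sq_nonneg _
    · have : 0 ≤ J * w.im * r := by positivity
      rw [max_eq_left h.le]
      nlinarith
  simp only [normSq_apply, add_re, add_im, mul_re, mul_im, ofReal_re, ofReal_im, I_re, I_im]
  nlinarith

theorem ContinuousLinearMap.IsPositive.sqrt_max_sq_add_sq_mul_le_norm_inner
    {H : Type*} [NormedAddCommGroup H] [InnerProductSpace ℂ H] {B : H →L[ℂ] H}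
    (hB : B.IsPositive) {w a : ℂ} {J : ℝ} (hJ : J = 1 ∨ J = -1)
    (hwa : w * a = Complex.I * J) (x : H) :
    Real.sqrt ((max (J * w.im) 0) ^ 2 + w.re ^ 2) * ‖x‖ ^ 2
      ≤ ‖w‖ * ‖inner ℂ ((1 + a • B) x) x‖ := by
  have hBx : inner ℂ x (B x) = (inner ℂ x (B x)).re :=
    Complex.eq_re_of_ofReal_le (by exact_mod_cast hB.inner_nonneg_right x)
  calc _ ≤ ‖w * (‖x‖ ^ 2 : ℝ) + Complex.I * J * (inner ℂ x (B x)).re‖ :=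
        w.sqrt_max_sq_add_sq_mul_le_norm hJ (sq_nonneg _) (hB.re_inner_nonneg_right x)
    _ = ‖w * inner ℂ x ((1 + a • B) x)‖ := by
        rw [inner_one_add_smul_apply_self, ← hBx, mul_add, ← mul_assoc, hwa]
        push_cast
        rfl
    _ = ‖w‖ * ‖inner ℂ ((1 + a • B) x) x‖ := by rw [norm_mul, norm_inner_symm]

theorem inverse_bound_nonneg_selfadjoint_general
    {H : Type*} [NormedAddCommGroup H] [InnerProductSpace ℂ H] [CompleteSpace H]
    (B : H →L[ℂ] H) (hB : IsSelfAdjoint B)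
    (hBpos : ∀ u : H, 0 ≤ (inner ℂ (B u) u : ℂ).re)
    (k Φ : ℂ) (J : ℝ) (hJ : J = 1 ∨ J = -1)
    (hw : (k / Φ).re ≠ 0 ∨ 0 < J * (k / Φ).im) :
    ∃ C : H →L[ℂ] H,
      C * (1 + (Complex.I * (J : ℂ) * Φ / k) • B) = 1
      ∧ (1 + (Complex.I * (J : ℂ) * Φ / k) • B) * C = 1
      ∧ ‖C‖ ≤ ‖k / Φ‖
          / Real.sqrt ((max (J * (k / Φ).im) 0) ^ 2 + ((k / Φ).re) ^ 2) := by
  set w := k / Φ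
  have hw0 : w ≠ 0 := by
    rintro h
    simp [h] at hw
  obtain ⟨hk, hΦ⟩ := div_ne_zero_iff.mp hw0
  have hc : 0 < Real.sqrt ((max (J * w.im) 0) ^ 2 + w.re ^ 2) := by
    apply Real.sqrt_pos.2
    rcases hw with h | h
    · positivity
    · rw [max_eq_left h.le]
      positivity
  have hwa : w * (Complex.I * J * Φ / k) = Complex.I * J := by
    simp only [w]
    field_simp
  have hBnonneg : B.IsPositive := isPositive_def'.mpr ⟨hB, hBpos⟩
  obtain ⟨C, hCT, hTC, hC⟩ := (1 + (Complex.I * (J : ℂ) * Φ / k) • B)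
    |>.exists_inverse_norm_le_of_forall_le_norm_inner_map (div_pos hc (norm_pos_iff.2 hw0))
      fun x ↦ by
        rw [mul_div_assoc', div_le_iff₀ (norm_pos_iff.2 hw0), mul_comm, mul_comm _ ‖w‖]
        exact hBnonneg.sqrt_max_sq_add_sq_mul_le_norm_inner hJ hwa x
  exact ⟨C, hCT, hTC, hC.trans_eq (inv_div _ _)⟩

/-- Let `B ≥ 0` be a bounded nonnegative self-adjoint operator on a
complex Hilbert space, `k, Φ ∈ ℂ \ {0}`, `J ∈ {+1, -1}`, `w := k/Φ`, and assume
`Re w ≠ 0` or `J·Im w > 0`.  Then `I + (iJΦ/k)·B` is boundedly invertible with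
`‖(I + (iJΦ/k)·B)⁻¹‖ ≤ |w| / sqrt(((J·Im w)₊)² + (Re w)²)`. -/
theorem inverse_bound_nonneg_selfadjoint
    {H : Type*} [NormedAddCommGroup H] [InnerProductSpace ℂ H] [CompleteSpace H]
    (B : H →L[ℂ] H) (hB : IsSelfAdjoint B)
    (hBpos : ∀ u : H, 0 ≤ (inner ℂ (B u) u : ℂ).re)
    (k Φ : ℂ) (hk : k ≠ 0) (hΦ : Φ ≠ 0) (J : ℝ) (hJ : J = 1 ∨ J = -1)
    (hw : (k / Φ).re ≠ 0 ∨ 0 < J * (k / Φ).im) :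
    ∃ C : H →L[ℂ] H,
      C * (1 + (Complex.I * (J : ℂ) * Φ / k) • B) = 1
      ∧ (1 + (Complex.I * (J : ℂ) * Φ / k) • B) * C = 1
      ∧ ‖C‖ ≤ ‖k / Φ‖
          / Real.sqrt ((max (J * (k / Φ).im) 0) ^ 2 + ((k / Φ).re) ^ 2) :=
  inverse_bound_nonneg_selfadjoint_general B hB hBpos k Φ J hJ hw
end

section
/- Let H be a complex Hilbert space and let B : H → H be a bounded self-adjoint operator with B ≥ 0 (i.e. ⟨Bu, u⟩ ≥ 0 for all u ∈ H). Let δ > 0, let J ∈ {+1, −1}, let k, Φ ∈ ℂ \ {0}, and assume that k/Φ lies in the cone C_δ(J), i.e. −δ·J·Im(k/Φ) ≤ |Re(k/Φ)|. Then the operator I + (iJΦ/k)·B is boundedly invertible and ‖(I + (iJΦ/k)·B)^{−1}‖ ≤ sqrt(1 + δ^{−2}). -/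
/-!
With `z = iJΦ/k`, the cone condition on `k/Φ` says that `z` avoids the open sector
`|Im z| < -δ Re z` around the negative real axis. For `B ≥ 0` self-adjoint,
`⟪u, (1 + z • B) u⟫ = ‖u‖² + t z` with `t = ⟪B u, u⟫ ≥ 0`, and the distance from `-‖u‖²` to the
ray `ℝ≥0 z` is at least `‖u‖²` times the sine `δ / √(1 + δ²)` of the sector's half-angle. This
numerical-range bound makes `1 + z • B` bounded below by `(1 + δ⁻²)^(-1/2)`; the orthogonal
complement of its (closed) range is then trivial, as in the Lax–Milgram argument.
-/

open scoped InnerProductSpace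

namespace Complex

lemma le_sqrt_one_add_inv_sq_mul_norm_add_mul {δ : ℝ} (hδ : 0 < δ) {w : ℂ}
    (hw : -(δ * w.re) ≤ |w.im|) {n t : ℝ} (hn : 0 ≤ n) (ht : 0 ≤ t) :
    n ≤ √(1 + (δ ^ 2)⁻¹) * ‖(n : ℂ) + t * w‖ := by
  have hsq : ‖(n : ℂ) + t * w‖ ^ 2 = (n + t * w.re) ^ 2 + (t * w.im) ^ 2 := by
    rw [Complex.sq_norm, normSq_apply]
    simp only [add_re, add_im, ofReal_re, ofReal_im, mul_re, mul_im]
    ring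
  have key : δ ^ 2 * n ^ 2 ≤ (δ ^ 2 + 1) * ((n + t * w.re) ^ 2 + (t * w.im) ^ 2) := by
    rcases le_or_gt 0 w.re with hre | hre
    · have : n ^ 2 ≤ (n + t * w.re) ^ 2 := by
        nlinarith [mul_nonneg (mul_nonneg hn ht) hre]
      nlinarith [sq_nonneg (t * w.im), sq_nonneg n]
    · have him : δ ^ 2 * w.re ^ 2 ≤ w.im ^ 2 := by
        rw [← sq_abs w.im, ← neg_sq w.re, ← mul_pow]
        exact pow_le_pow_left₀ (by nlinarith) (by linarith) 2
      -- `(1 + δ²)((n + s)² + δ²s²) - δ²n² = (n + (1 + δ²)s)²`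
      nlinarith [sq_nonneg (n + (1 + δ ^ 2) * (t * w.re)),
        mul_nonneg (sq_nonneg t) (sub_nonneg.mpr him)]
  calc n ≤ √((1 + (δ ^ 2)⁻¹) * ‖(n : ℂ) + t * w‖ ^ 2) := by
        refine Real.le_sqrt_of_sq_le ?_
        rw [hsq, show 1 + (δ ^ 2)⁻¹ = (δ ^ 2 + 1) / δ ^ 2 by field_simp, div_mul_eq_mul_div,
          le_div_iff₀ (by positivity)]
        linarith
    _ = √(1 + (δ ^ 2)⁻¹) * ‖(n : ℂ) + t * w‖ := by
        rw [Real.sqrt_mul (by positivity), Real.sqrt_sq (norm_nonneg _)]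

lemma neg_mul_re_I_mul_inv_le_abs_im {δ J : ℝ} (hJ : |J| = 1) {w : ℂ} (hw : w ≠ 0)
    (hcone : -(δ * J * w.im) ≤ |w.re|) :
    -(δ * (I * J * w⁻¹).re) ≤ |(I * J * w⁻¹).im| := by
  have hN : 0 < normSq w := normSq_pos.mpr hw
  have hre : (I * J * w⁻¹).re = J * w.im / normSq w := by
    simp only [mul_re, mul_im, I_re, I_im, ofReal_re, ofReal_im, inv_re, inv_im]
    ring
  have him : (I * J * w⁻¹).im = J * w.re / normSq w := by
    simp only [mul_re, mul_im, I_re, I_im, ofReal_re, ofReal_im, inv_re, inv_im]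
    ring
  rw [hre, him, abs_div, abs_of_pos hN, abs_mul, hJ, one_mul, ← mul_div_assoc, ← mul_assoc,
    ← neg_div]
  gcongr

end Complex

namespace ContinuousLinearMap

variable {𝕜 E : Type*} [RCLike 𝕜] [NormedAddCommGroup E] [InnerProductSpace 𝕜 E]

lemma norm_le_mul_norm_apply_of_sq_le_mul_norm_inner {A : E →L[𝕜] E} {M : ℝ} (hM : 0 ≤ M)
    (hA : ∀ u, ‖u‖ ^ 2 ≤ M * ‖⟪u, A u⟫_𝕜‖) (u : E) : ‖u‖ ≤ M * ‖A u‖ := by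
  rcases eq_or_ne u 0 with rfl | hu
  · simp
  refine le_of_mul_le_mul_right ?_ (norm_pos_iff.mpr hu)
  calc ‖u‖ * ‖u‖ = ‖u‖ ^ 2 := (sq _).symm
    _ ≤ M * ‖⟪u, A u⟫_𝕜‖ := hA u
    _ ≤ M * (‖u‖ * ‖A u‖) := by gcongr; exact norm_inner_le_norm _ _
    _ = M * ‖A u‖ * ‖u‖ := by ring

lemma range_eq_top_of_sq_le_mul_norm_inner [CompleteSpace E] {A : E →L[𝕜] E} {M : ℝ}
    (hM : 0 ≤ M) (hA : ∀ u, ‖u‖ ^ 2 ≤ M * ‖⟪u, A u⟫_𝕜‖) : A.range = ⊤ := by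
  have hanti : AntilipschitzWith ⟨M, hM⟩ A :=
    A.antilipschitz_of_bound (norm_le_mul_norm_apply_of_sq_le_mul_norm_inner hM hA)
  have : CompleteSpace A.range :=
    (hanti.isClosed_range A.uniformContinuous).completeSpace_coe
  rw [← Submodule.orthogonal_eq_bot_iff, Submodule.eq_bot_iff]
  intro v hv
  have hv_inner : ⟪v, A v⟫_𝕜 = 0 :=
    Submodule.inner_left_of_mem_orthogonal (A.mem_range_self v) hv
  simpa [hv_inner] using hA v

lemma exists_inverse_of_sq_le_mul_norm_inner [CompleteSpace E] {A : E →L[𝕜] E} {M : ℝ}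
    (hM : 0 ≤ M) (hA : ∀ u, ‖u‖ ^ 2 ≤ M * ‖⟪u, A u⟫_𝕜‖) :
    ∃ C : E →L[𝕜] E, C * A = 1 ∧ A * C = 1 ∧ ‖C‖ ≤ M := by
  have hbound := norm_le_mul_norm_apply_of_sq_le_mul_norm_inner hM hA
  have hker : A.ker = ⊥ :=
    LinearMap.ker_eq_bot.mpr (A.antilipschitz_of_bound (K := ⟨M, hM⟩) hbound).injective
  have hrange := range_eq_top_of_sq_le_mul_norm_inner hM hA
  let e := ContinuousLinearEquiv.ofBijective A hker hrange
  refine ⟨e.symm, ?_, ?_, ?_⟩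
  · ext u
    exact ContinuousLinearEquiv.ofBijective_symm_apply_apply A hker hrange u
  · ext u
    exact ContinuousLinearEquiv.ofBijective_apply_symm_apply A hker hrange u
  · refine opNorm_le_bound _ hM fun y ↦ ?_
    simpa [e] using hbound (e.symm y)

end ContinuousLinearMap

/-- Let `B ≥ 0` be a bounded nonnegative self-adjoint operator on a
complex Hilbert space, `δ > 0`, `J ∈ {+1, -1}`, `k, Φ ∈ ℂ \ {0}` with `k/Φ` in the cone
`C_δ(J) = {w : -δ·J·Im w ≤ |Re w|}`.  Then `I + (iJΦ/k)·B` is boundedly invertible with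
`‖(I + (iJΦ/k)·B)⁻¹‖ ≤ sqrt(1 + δ⁻²)`. -/
theorem inverse_bound_nonneg_selfadjoint_cone
    {H : Type*} [NormedAddCommGroup H] [InnerProductSpace ℂ H] [CompleteSpace H]
    (B : H →L[ℂ] H) (hB : IsSelfAdjoint B)
    (hBpos : ∀ u : H, 0 ≤ (inner ℂ (B u) u : ℂ).re)
    (δ : ℝ) (hδ : 0 < δ) (J : ℝ) (hJ : J = 1 ∨ J = -1)
    (k Φ : ℂ) (hk : k ≠ 0) (hΦ : Φ ≠ 0)
    (hcone : -(δ * J * (k / Φ).im) ≤ |(k / Φ).re|) :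
    ∃ C : H →L[ℂ] H,
      C * (1 + (Complex.I * (J : ℂ) * Φ / k) • B) = 1
      ∧ (1 + (Complex.I * (J : ℂ) * Φ / k) • B) * C = 1
      ∧ ‖C‖ ≤ Real.sqrt (1 + (δ ^ 2)⁻¹) := by
  set z : ℂ := Complex.I * J * Φ / k
  have hz : Complex.I * J * (k / Φ)⁻¹ = z := by simp only [z, inv_div, mul_div_assoc]
  have hJ_abs : |J| = 1 := by rcases hJ with rfl | rfl <;> norm_num
  have hz_cone : -(δ * z.re) ≤ |z.im| :=
    hz ▸ Complex.neg_mul_re_I_mul_inv_le_abs_im hJ_abs (div_ne_zero hk hΦ) hcone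
  refine ContinuousLinearMap.exists_inverse_of_sq_le_mul_norm_inner (Real.sqrt_nonneg _)
    fun u ↦ ?_
  have hBu : ⟪u, B u⟫_ℂ = ((⟪B u, u⟫_ℂ).re : ℂ) :=
    (hB.isSymmetric u u).symm.trans
      (Complex.conj_eq_iff_re.mp (hB.isSymmetric.conj_inner_sym u u)).symm
  have hinner : ⟪u, (1 + z • B) u⟫_ℂ = ((‖u‖ ^ 2 : ℝ) : ℂ) + ((⟪B u, u⟫_ℂ).re : ℂ) * z := by
    rw [add_apply, one_apply_eq_self, smul_apply, inner_add_right, inner_smul_right, hBu,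
      inner_self_eq_norm_sq_to_K, RCLike.ofReal_eq_complex_ofReal]
    push_cast
    ring
  rw [hinner]
  exact Complex.le_sqrt_one_add_inv_sq_mul_norm_add_mul hδ hz_cone (sq_nonneg _) (hBpos u)
end

section
/- Let (μ_j)_{j ∈ ℕ} be a nonincreasing sequence of positive real numbers such that for every ρ ∈ (0, 1) one has μ_j / ρ^j → 0 as j → ∞ (super-exponential decay). Then for every ν ∈ (0, 1) the set { j ∈ ℕ : μ_j − μ_{j+1} > ν·μ_j } is infinite. -/
/-!
If only finitely many relative gaps exceeded `ν`, then eventually `μ_{j+1} ≥ (1 - ν) μ_j`,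
so `μ_j / (1 - ν)^j` would be eventually nondecreasing and positive, and could not tend to `0`.
-/

open Filter Topology

lemma div_pow_le_div_pow_succ {u : ℕ → ℝ} {ρ : ℝ} (hρ : 0 < ρ) {j : ℕ}
    (h : ρ * u j ≤ u (j + 1)) : u j / ρ ^ j ≤ u (j + 1) / ρ ^ (j + 1) := by
  rw [div_le_div_iff₀ (pow_pos hρ j) (pow_pos hρ (j + 1)), pow_succ]
  nlinarith [pow_pos hρ j]

lemma not_tendsto_div_pow_zero_of_eventually_mul_le {u : ℕ → ℝ} {ρ : ℝ} (hρ : 0 < ρ)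
    (hpos : ∀ j, 0 < u j) (h : ∀ᶠ j in atTop, ρ * u j ≤ u (j + 1)) :
    ¬ Tendsto (fun j => u j / ρ ^ j) atTop (𝓝 0) := by
  intro hlim
  obtain ⟨N, hN⟩ := eventually_atTop.mp h
  have hmono : MonotoneOn (fun j => u j / ρ ^ j) (Set.Ici N) :=
    monotoneOn_nat_Ici_of_le_succ fun j hj => div_pow_le_div_pow_succ hρ (hN j hj)
  have hsmall : ∀ᶠ j in atTop, u j / ρ ^ j < u N / ρ ^ N :=
    hlim.eventually (gt_mem_nhds (div_pos (hpos N) (pow_pos hρ N)))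
  obtain ⟨j, hjN, hj⟩ := ((eventually_ge_atTop N).and hsmall).exists
  exact (hmono (Set.mem_Ici.mpr le_rfl) hjN hjN).not_gt hj

theorem superexponential_decay_infinitely_many_gaps_general
    (μ : ℕ → ℝ) (hpos : ∀ j, 0 < μ j)
    (hdecay : ∀ ρ : ℝ, 0 < ρ → ρ < 1 →
      Tendsto (fun j => μ j / ρ ^ j) atTop (nhds 0)) :
    ∀ ν : ℝ, 0 < ν → ν < 1 →
      {j : ℕ | μ j - μ (j + 1) > ν * μ j}.Infinite := by
  intro ν hν0 hν1
  rw [← Nat.frequently_atTop_iff_infinite]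
  by_contra hfew
  have hratio : ∀ᶠ j in atTop, (1 - ν) * μ j ≤ μ (j + 1) :=
    (not_frequently.mp hfew).mono fun j hj => by linarith [not_lt.mp hj]
  exact not_tendsto_div_pow_zero_of_eventually_mul_le (by linarith) hpos hratio
    (hdecay (1 - ν) (by linarith) (by linarith))

/-- If `(μ_j)` is a nonincreasing sequence of positive reals with
super-exponential decay (`μ_j/ρ^j → 0` for every `ρ ∈ (0,1)`), then for every
`ν ∈ (0,1)` there are infinitely many `j` with a relative gap `μ_j - μ_{j+1} > ν·μ_j`. -/
theorem superexponential_decay_infinitely_many_gaps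
    (μ : ℕ → ℝ) (hpos : ∀ j, 0 < μ j) (hmono : Antitone μ)
    (hdecay : ∀ ρ : ℝ, 0 < ρ → ρ < 1 →
      Tendsto (fun j => μ j / ρ ^ j) atTop (nhds 0)) :
    ∀ ν : ℝ, 0 < ν → ν < 1 →
      {j : ℕ | μ j - μ (j + 1) > ν * μ j}.Infinite :=
  superexponential_decay_infinitely_many_gaps_general μ hpos hdecay
end
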